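/- The data-braid completion db(w) of any data word w is a data braid: its minimum datum appears at the first position; in its ordered partition, each factor's data projection is a subsequence of the next factor's data projection; and the marked positions are exactly the first positions of factors, which carry the minimum datum. -/

import Mathlib

variable {A : Type*} {D : Type*} [LinearOrder D]

/-- The ordered partition of a data word: its factorization into maximal strictly
increasing (in the data component) factors. -/
def orderedPartition : List (A × D) → List (List (A × D))
  | [] => []
  | p :: rest =>
    match orderedPartition rest with
    | [] => [[p]]
    | b :: bs =>
      match b.head? with
      | some q => if p.2 < q.2 then (p :: b) :: bs else [p] :: b :: bs
      | none => [p] :: b :: bs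

/-- Complete a strictly increasing factor `b` with checkmark positions `(✓, d)` for
every required datum `d` (from `req`) missing in `b`, keeping data sorted. -/
def completeFactor (req : List D) (b : List (A × D)) : List ((A ⊕ Unit) × D) :=
  (List.insertionSort (· ≤ ·) (req ++ b.map Prod.snd).dedup).map (fun d =>
    match b.find? (fun p => decide (p.2 = d)) with
    | some p => (Sum.inl p.1, d)
    | none => (Sum.inr (), d))

/-- Complete all factors, cumulatively requiring every datum seen in earlier factors. -/
def dbFactors : List D → List (List (A × D)) → List (List ((A ⊕ Unit) × D))
  | _, [] => []
  | req, b :: bs => completeFactor req b :: dbFactors (req ++ b.map Prod.snd) bs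

/-- Mark (flag `true`) the first position of a factor. -/
def markFirst {β : Type*} : List (β × D) → List ((β × Bool) × D)
  | [] => []
  | p :: rest => ((p.1, true), p.2) :: rest.map (fun q => ((q.1, false), q.2))

/-- The data-braid completion `db w` of a data word `w`: insert `(✓, d_min)` at the
front of every factor not containing the minimum datum, insert `(✓, d)` into every
factor following one where `d` occurs, and mark the first position of each factor. -/
def db (w : List (A × D)) : List (((A ⊕ Unit) × Bool) × D) :=
  match w with
  | [] => []
  | p :: rest =>
    ((dbFactors [((p :: rest).map Prod.snd).foldl min p.2]
        (orderedPartition (p :: rest))).map markFirst).flatten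

/-- An ordered partition of a data word: a factorization into nonempty consecutive
factors, strictly increasing in the data component, such that the first datum of each
next factor is ≤ the last datum of the previous factor (maximality). -/
def IsOrderedPartition {B : Type*} (P : List (List (B × D))) (w : List (B × D)) : Prop :=
  P.flatten = w ∧
  (∀ b ∈ P, b ≠ []) ∧
  (∀ b ∈ P, (b.map Prod.snd).Chain' (· < ·)) ∧
  P.Chain' (fun b c => ∀ x ∈ (c.map Prod.snd).head?, ∀ y ∈ (b.map Prod.snd).getLast?, x ≤ y)

/-- A data braid w.r.t. a marking of the alphabet: the minimum datum appears at the
first position, the data projection of each factor of the ordered partition is a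
subsequence of that of the next factor, and the marked positions are exactly those
carrying the first datum. -/
def IsDataBraid {B : Type*} (marked : B → Prop) (w : List (B × D)) : Prop :=
  ∃ P : List (List (B × D)), IsOrderedPartition P w ∧
    (∀ d₁ ∈ (w.map Prod.snd).head?,
      (∀ p ∈ w, d₁ ≤ p.2) ∧ (∀ p ∈ w, marked p.1 ↔ p.2 = d₁)) ∧
    P.Chain' (fun b c => (b.map Prod.snd).Sublist (c.map Prod.snd))

/-! Let `m` be the minimum datum of `w`. Each completed factor has as data projection the sorted,
duplicate-free list of its own data together with all data required so far, which include `m`;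
so it is strictly increasing and starts with `m`, and marking its first position marks exactly
its occurrence of `m`. The required data only grow from one factor to the next, and of two
strictly increasing lists the smaller set is a sublist of the larger. Since every factor starts
with the global minimum, consecutive factors also meet the maximality condition. -/

namespace List

variable {α : Type*}

theorem Pairwise.sublist_of_subset [Preorder α] {l₁ l₂ : List α} (h₁ : l₁.Pairwise (· < ·))
    (h₂ : l₂.Pairwise (· < ·)) (h : l₁ ⊆ l₂) : l₁ <+ l₂ :=
  sublist_of_subperm_of_pairwise (h₁.nodup.subperm h) h₁ h₂

theorem Pairwise.head?_eq_of_mem_of_forall_le [PartialOrder α] {l : List α} {m : α}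
    (hl : l.Pairwise (· ≤ ·)) (hm : m ∈ l) (hle : ∀ x ∈ l, m ≤ x) : l.head? = some m := by
  cases l with
  | nil => cases hm
  | cons a t =>
    rcases mem_cons.1 hm with rfl | hmt
    · rfl
    · exact congrArg some (le_antisymm (rel_of_pairwise_cons hl hmt) (hle a mem_cons_self))

theorem Pairwise.le_of_head?_eq [Preorder α] {l : List α} {m x : α}
    (hl : l.Pairwise (· ≤ ·)) (hm : l.head? = some m) (hx : x ∈ l) : m ≤ x := by
  cases l with
  | nil => cases hm
  | cons a t =>
    obtain rfl : a = m := Option.some.inj hm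
    rcases mem_cons.1 hx with rfl | hxt
    · exact le_rfl
    · exact rel_of_pairwise_cons hl hxt

theorem eq_of_mem_head?_flatten {L : List (List α)} {a x : α}
    (hL : ∀ l ∈ L, l.head? = some a) (hx : x ∈ L.flatten.head?) : x = a := by
  cases L with
  | nil => cases hx
  | cons l L =>
    rw [flatten_cons, head?_append, hL l mem_cons_self] at hx
    simpa [eq_comm] using hx

theorem foldl_min_le_of_mem [LinearOrder α] {l : List α} {a x : α} (hx : x ∈ l) :
    l.foldl min a ≤ x :=
  (le_min?_iff (xs := a :: l) rfl).1 le_rfl x (mem_cons_of_mem a hx)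

end List

theorem orderedPartition_flatten : ∀ w : List (A × D), (orderedPartition w).flatten = w
  | [] => rfl
  | p :: rest => by
    have ih := orderedPartition_flatten rest
    rw [orderedPartition]
    repeat' split
    all_goals simp_all

theorem completeFactor_map_snd (req : List D) (b : List (A × D)) :
    (completeFactor req b).map Prod.snd
      = (req ++ b.map Prod.snd).dedup.insertionSort (· ≤ ·) := by
  rw [completeFactor, List.map_map]
  convert List.map_id _
  ext d
  simp only [Function.comp_apply, id_eq]
  cases b.find? (fun p => decide (p.2 = d)) <;> rfl

theorem mem_completeFactor_map_snd {req : List D} {b : List (A × D)} {d : D} :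
    d ∈ (completeFactor req b).map Prod.snd ↔ d ∈ req ++ b.map Prod.snd := by
  rw [completeFactor_map_snd, (List.perm_insertionSort _ _).mem_iff, List.mem_dedup]

theorem pairwise_lt_completeFactor_map_snd (req : List D) (b : List (A × D)) :
    ((completeFactor req b).map Prod.snd).Pairwise (· < ·) := by
  rw [completeFactor_map_snd]
  exact (List.sortedLE_insertionSort.sortedLT_of_nodup
    ((List.perm_insertionSort _ _).nodup_iff.2 (List.nodup_dedup _))).pairwise

theorem completeFactor_map_snd_sublist (req : List D) (b b' : List (A × D)) :
    ((completeFactor req b).map Prod.snd).Sublist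
      ((completeFactor (req ++ b.map Prod.snd) b').map Prod.snd) :=
  (pairwise_lt_completeFactor_map_snd _ _).sublist_of_subset
    (pairwise_lt_completeFactor_map_snd _ _) fun _ hd =>
      mem_completeFactor_map_snd.2 (List.mem_append_left _ (mem_completeFactor_map_snd.1 hd))

theorem head?_completeFactor_map_snd {req : List D} {b : List (A × D)} {m : D} (hm : m ∈ req)
    (hle : ∀ d ∈ req ++ b.map Prod.snd, m ≤ d) :
    ((completeFactor req b).map Prod.snd).head? = some m :=
  (pairwise_lt_completeFactor_map_snd req b).imp le_of_lt |>.head?_eq_of_mem_of_forall_le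
    (mem_completeFactor_map_snd.2 (List.mem_append_left _ hm))
    fun _ hd => hle _ (mem_completeFactor_map_snd.1 hd)

theorem pairwise_lt_of_mem_dbFactors :
    ∀ {req : List D} {bs : List (List (A × D))}, ∀ c ∈ dbFactors req bs,
      (c.map Prod.snd).Pairwise (· < ·)
  | _, [], _, hc => by simp [dbFactors] at hc
  | req, b :: bs, c, hc => by
    rw [dbFactors, List.mem_cons] at hc
    rcases hc with rfl | hc
    · exact pairwise_lt_completeFactor_map_snd req b
    · exact pairwise_lt_of_mem_dbFactors c hc

theorem head?_of_mem_dbFactors {m : D} :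
    ∀ {req : List D} {bs : List (List (A × D))}, m ∈ req → (∀ d ∈ req, m ≤ d) →
      (∀ b ∈ bs, ∀ p ∈ b, m ≤ p.2) → ∀ c ∈ dbFactors req bs, (c.map Prod.snd).head? = some m
  | _, [], _, _, _, _, hc => by simp [dbFactors] at hc
  | req, b :: bs, hm, hreq, hbs, c, hc => by
    have hle : ∀ d ∈ req ++ b.map Prod.snd, m ≤ d := by
      simp only [List.mem_append, List.mem_map]
      rintro d (hd | ⟨p, hp, rfl⟩)
      exacts [hreq d hd, hbs b List.mem_cons_self p hp]
    rw [dbFactors, List.mem_cons] at hc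
    rcases hc with rfl | hc
    · exact head?_completeFactor_map_snd hm hle
    · exact head?_of_mem_dbFactors (List.mem_append_left _ hm) hle
        (fun b' hb' => hbs b' (List.mem_cons_of_mem _ hb')) c hc

theorem isChain_dbFactors :
    ∀ (req : List D) (bs : List (List (A × D))),
      (dbFactors req bs).IsChain fun b c => (b.map Prod.snd).Sublist (c.map Prod.snd)
  | _, [] => List.isChain_nil
  | _, [_] => List.isChain_singleton _
  | req, b :: b' :: bs => by
    rw [dbFactors, dbFactors, List.isChain_cons_cons]
    exact ⟨completeFactor_map_snd_sublist req b b', by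
      simpa only [dbFactors] using isChain_dbFactors (req ++ b.map Prod.snd) (b' :: bs)⟩

theorem markFirst_map_snd {β E : Type*} (l : List (β × E)) :
    (markFirst l).map Prod.snd = l.map Prod.snd := by
  cases l <;> simp [markFirst, Function.comp_def]

theorem marked_iff_of_mem_markFirst {β E : Type*} [Preorder E] {l : List (β × E)} {m : E}
    (hlt : (l.map Prod.snd).Pairwise (· < ·)) (hm : (l.map Prod.snd).head? = some m) :
    ∀ p ∈ markFirst l, p.1.2 = true ↔ p.2 = m := by
  cases l with
  | nil => simp [markFirst]
  | cons q t =>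
    obtain rfl : q.2 = m := Option.some.inj hm
    simp only [markFirst, List.mem_cons, List.mem_map, forall_eq_or_imp,
      forall_exists_index, and_imp]
    refine ⟨trivial, ?_⟩
    rintro _ r hr rfl
    simpa using (List.rel_of_pairwise_cons hlt (List.mem_map_of_mem hr)).ne'

theorem isOrderedPartition_map_markFirst {β : Type*} {m : D} {L : List (List (β × D))}
    (hlt : ∀ c ∈ L, (c.map Prod.snd).Pairwise (· < ·))
    (hhead : ∀ c ∈ L, (c.map Prod.snd).head? = some m) :
    IsOrderedPartition (L.map markFirst) (L.map markFirst).flatten := by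
  refine ⟨rfl, ?_, ?_, ?_⟩
  · simp only [List.mem_map, forall_exists_index, and_imp]
    rintro _ c hc rfl hnil
    have hdata := congrArg List.head? (markFirst_map_snd c)
    rw [hnil, hhead c hc] at hdata
    cases hdata
  · simp only [List.mem_map, forall_exists_index, and_imp]
    rintro _ c hc rfl
    exact markFirst_map_snd c ▸ (hlt c hc).isChain
  · refine (List.pairwise_of_forall_mem_list ?_).isChain
    simp only [List.mem_map, forall_exists_index, and_imp]
    rintro _ c hc rfl _ c' hc' rfl x hx y hy
    rw [markFirst_map_snd, hhead c' hc', Option.mem_some_iff] at hx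
    rw [markFirst_map_snd] at hy
    exact hx ▸ ((hlt c hc).imp le_of_lt).le_of_head?_eq (hhead c hc) (List.mem_of_mem_getLast? hy)

theorem isDataBraid_flatten_map_markFirst {β : Type*} {m : D} {L : List (List (β × D))}
    (hlt : ∀ c ∈ L, (c.map Prod.snd).Pairwise (· < ·))
    (hhead : ∀ c ∈ L, (c.map Prod.snd).head? = some m)
    (hsub : L.IsChain fun b c => (b.map Prod.snd).Sublist (c.map Prod.snd)) :
    IsDataBraid (fun l => l.2 = true) (L.map markFirst).flatten := by
  refine ⟨L.map markFirst, isOrderedPartition_map_markFirst hlt hhead, ?_, ?_⟩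
  · intro d₁ hd₁
    obtain rfl : d₁ = m := by
      rw [List.map_flatten, List.map_map] at hd₁
      refine List.eq_of_mem_head?_flatten ?_ hd₁
      simp only [List.mem_map, Function.comp_apply, forall_exists_index, and_imp]
      rintro _ c hc rfl
      rw [markFirst_map_snd, hhead c hc]
    simp only [List.mem_flatten, List.mem_map, forall_exists_index, and_imp]
    refine ⟨?_, ?_⟩ <;> rintro p _ c hc rfl hp
    · exact ((hlt c hc).imp le_of_lt).le_of_head?_eq (hhead c hc)
        (markFirst_map_snd c ▸ List.mem_map_of_mem hp)
    · exact marked_iff_of_mem_markFirst (hlt c hc) (hhead c hc) p hp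
  · exact (List.isChain_map markFirst).2 (by simpa only [markFirst_map_snd] using hsub)

/-- The data-braid completion `db w` of any data word `w` is a data braid, with the
marked positions (those flagged `true`) exactly the positions carrying the minimum
datum, i.e. the first positions of the factors. -/
theorem db_isDataBraid (w : List (A × D)) :
    IsDataBraid (fun l => l.2 = true) (db w) := by
  cases w with
  | nil => exact ⟨[], ⟨rfl, by simp, by simp, List.isChain_nil⟩, by simp [db], List.isChain_nil⟩
  | cons p rest =>
    set m := ((p :: rest).map Prod.snd).foldl min p.2
    have hmin : ∀ b ∈ orderedPartition (p :: rest), ∀ q ∈ b, m ≤ q.2 := fun b hb q hq =>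
      List.foldl_min_le_of_mem <| List.mem_map_of_mem <|
        orderedPartition_flatten (p :: rest) ▸ List.mem_flatten.2 ⟨b, hb, hq⟩
    exact isDataBraid_flatten_map_markFirst pairwise_lt_of_mem_dbFactors
      (head?_of_mem_dbFactors (List.mem_singleton_self m)
        (fun _ hd => (List.mem_singleton.1 hd).ge) hmin) (isChain_dbFactors _ _)
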